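/- arXiv:2403.09844 — 5 statements merged into one kernel-verified Lean document; each statement's English description precedes it below -/
import Mathlib

section
/- Let F : ℂ² → ℂ² be the blow-up map F(x,z) = (x, x·z). Then for all real numbers ε, ε' with 0 < ε' < ε and for every neighborhood V of the origin in ℂ², the sets F(B(0,ε')) ∩ V and F(B(0,ε)) ∩ V are distinct (where B(0,r) denotes the open metric ball of radius r centered at 0 in ℂ²). In particular, the germ at the origin of the image F(B(0,ε)) depends on ε, i.e. F does not have a well-defined local image as a set germ. -/
/-- The blow-up map `F(x,z) = (x, x·z)` does not have a well-defined local image as a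
set germ at the origin: for any two radii `0 < ε' < ε` and any neighborhood `V` of the
origin, `F(B(0,ε')) ∩ V ≠ F(B(0,ε)) ∩ V`. -/
theorem blowup_image_not_well_defined_germ
    (F : ℂ × ℂ → ℂ × ℂ) (hF : ∀ x z : ℂ, F (x, z) = (x, x * z)) :
    ∀ ε ε' : ℝ, 0 < ε' → ε' < ε →
      ∀ V ∈ nhds ((0, 0) : ℂ × ℂ),
        F '' Metric.ball 0 ε' ∩ V ≠ F '' Metric.ball 0 ε ∩ V := by
  intro ε ε' hε' hlt V hV h
  obtain ⟨δ, hδ, hball⟩ := Metric.mem_nhds_iff.mp hV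
  set t : ℝ := min δ (min ε' (δ / ε')) / 2 with ht
  have ht0 : 0 < t := by
    have : 0 < δ / ε' := div_pos hδ hε'
    positivity
  have htδ : t < δ := by
    have h1 := min_le_left δ (min ε' (δ / ε'))
    rw [ht]; linarith
  have htε' : t < ε' := by
    have h1 : min δ (min ε' (δ / ε')) ≤ ε' :=
      le_trans (min_le_right _ _) (min_le_left _ _)
    have : t ≤ ε' / 2 := by
      rw [ht]; linarith
    linarith
  have htδε' : t * ε' < δ := by
    have h1 : min δ (min ε' (δ / ε')) ≤ δ / ε' :=
      le_trans (min_le_right _ _) (min_le_right _ _)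
    have h2 : t ≤ δ / ε' / 2 := by rw [ht]; linarith
    have h3 : t * ε' ≤ (δ / ε' / 2) * ε' :=
      mul_le_mul_of_nonneg_right h2 (le_of_lt hε')
    have h4 : (δ / ε' / 2) * ε' = δ / 2 := by
      field_simp
    rw [h4] at h3
    linarith
  -- the witness point
  set p : ℂ × ℂ := ((t : ℂ), (t : ℂ) * (ε' : ℂ)) with hp
  have hnorm1 : ‖(t : ℂ)‖ = t := by
    simp [Complex.norm_real, abs_of_pos ht0]
  have hnorm2 : ‖(t : ℂ) * (ε' : ℂ)‖ = t * ε' := by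
    rw [norm_mul, hnorm1]
    simp [Complex.norm_real, abs_of_pos hε']
  have hpV : p ∈ V := by
    apply hball
    have h00 : ((0, 0) : ℂ × ℂ) = 0 := rfl
    rw [Metric.mem_ball, h00, dist_zero_right, Prod.norm_def]
    simp only [hp]
    rw [hnorm1, hnorm2]
    exact max_lt htδ htδε'
  have hpbig : p ∈ F '' Metric.ball 0 ε := by
    refine ⟨((t : ℂ), (ε' : ℂ)), ?_, ?_⟩
    · rw [Metric.mem_ball, dist_zero_right, Prod.norm_def]
      have : ‖(ε' : ℂ)‖ = ε' := by simp [abs_of_pos hε']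
      rw [hnorm1]
      simp only [this]
      exact max_lt (lt_trans htε' hlt) hlt
    · rw [hF]
  have hpmem : p ∈ F '' Metric.ball 0 ε' ∩ V := by
    rw [h]; exact ⟨hpbig, hpV⟩
  obtain ⟨⟨⟨a, b⟩, hab, hFab⟩, -⟩ := hpmem
  rw [hF] at hFab
  have ha : a = (t : ℂ) := congrArg Prod.fst hFab
  have hb : a * b = (t : ℂ) * (ε' : ℂ) := congrArg Prod.snd hFab
  rw [ha] at hb
  have htne : (t : ℂ) ≠ 0 := by
    simp [Complex.ofReal_ne_zero]; exact ne_of_gt ht0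
  have hbe : b = (ε' : ℂ) := mul_left_cancel₀ htne hb
  rw [Metric.mem_ball, dist_zero_right, Prod.norm_def] at hab
  have : ‖b‖ < ε' := lt_of_le_of_lt (le_max_right _ _) hab
  rw [hbe] at this
  simp [abs_of_pos hε'] at this
end

section
/- Let n ≥ 1, let U ⊆ ℂⁿ be open and connected, let a ∈ U, and let f, g : ℂⁿ → ℂ be analytic on U with f(a) = g(a) = 0 and with g not identically zero on U. Assume there exist a sequence of complex numbers (γ_s)_{s≥1} and, for each integer s ≥ 1, a function h_s : ℂⁿ → ℂ analytic on U, such that f(x) = γ₁·g(x) + γ₂·g(x)² + ⋯ + γ_s·g(x)^s + h_s(x)·g(x)^s for all x ∈ U. Then there exists r > 0 such that the power series Σ_{j≥1} γ_j·λ^j is absolutely summable for every λ ∈ ℂ with |λ| < r, and, denoting θ(λ) := Σ_{j≥1} γ_j·λ^j, there exists an open neighborhood Ω of a such that f(x) = θ(g(x)) for every x ∈ Ω. -/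
open Metric Filter Set Complex Topology Real

set_option maxHeartbeats 1000000

/-- Summability of a power series with geometrically bounded coefficients. -/
lemma my_summable {c : ℕ → ℂ} {K q : ℝ} (hq : 0 < q)
    (hb : ∀ n, ‖c n‖ ≤ K * q ^ n) {w : ℂ} (hw : ‖w‖ < q⁻¹) :
    Summable fun n : ℕ => ‖c n * w ^ n‖ := by
  have hqw : q * ‖w‖ < 1 := by
    have h1 := (mul_lt_mul_iff_right₀ hq).mpr hw
    rwa [mul_inv_cancel₀ hq.ne'] at h1
  have hqw0 : 0 ≤ q * ‖w‖ := mul_nonneg hq.le (norm_nonneg _)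
  have hg : Summable fun n : ℕ => K * (q * ‖w‖) ^ n :=
    (summable_geometric_of_lt_one hqw0 hqw).mul_left K
  refine Summable.of_nonneg_of_le (fun n => norm_nonneg _) (fun n => ?_) hg
  rw [norm_mul, norm_pow, mul_pow]
  calc ‖c n‖ * ‖w‖ ^ n ≤ (K * q ^ n) * ‖w‖ ^ n :=
        mul_le_mul_of_nonneg_right (hb n) (by positivity)
    _ = K * (q ^ n * ‖w‖ ^ n) := by ring

/-- A power series with geometrically bounded coefficients defines an analytic function. -/
lemma my_analytic {c : ℕ → ℂ} {K q : ℝ} (hq : 0 < q)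
    (hb : ∀ n, ‖c n‖ ≤ K * q ^ n) :
    AnalyticOnNhd ℂ (fun w : ℂ => ∑' n : ℕ, c n * w ^ n) (ball (0:ℂ) q⁻¹) := by
  have hK : 0 ≤ K := by
    have := (norm_nonneg (c 0)).trans (hb 0); simpa using this
  set p := FormalMultilinearSeries.ofScalars ℂ c with hp
  have hrad : ENNReal.ofReal q⁻¹ ≤ p.radius := by
    apply ENNReal.le_of_forall_nnreal_lt
    intro r hr
    rw [← ENNReal.ofReal_coe_nnreal,
      ENNReal.ofReal_lt_ofReal_iff (by positivity)] at hr
    apply p.le_radius_of_bound K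
    intro n
    have hn : ‖p n‖ = ‖c n‖ := FormalMultilinearSeries.ofScalars_norm ℂ c n
    rw [hn]
    have hrq : (r : ℝ) * q ≤ 1 := by
      have h2 := mul_le_mul_of_nonneg_right hr.le hq.le
      rwa [inv_mul_cancel₀ hq.ne'] at h2
    calc ‖c n‖ * (r:ℝ) ^ n ≤ (K * q ^ n) * (r:ℝ) ^ n :=
          mul_le_mul_of_nonneg_right (hb n) (by positivity)
      _ = K * ((r:ℝ) * q) ^ n := by rw [mul_pow]; ring
      _ ≤ K * 1 ^ n := by
          apply mul_le_mul_of_nonneg_left _ hK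
          exact pow_le_pow_left₀ (by positivity) hrq n
      _ = K := by simp
  have hradpos : 0 < p.radius := lt_of_lt_of_le (by simp [hq]) hrad
  have hball := p.hasFPowerSeriesOnBall hradpos
  have heq : (fun w : ℂ => ∑' n : ℕ, c n * w ^ n) = p.sum := by
    funext w
    have h3 := FormalMultilinearSeries.ofScalars_sum_eq (𝕜 := ℂ) (E := ℂ) c w
    rw [FormalMultilinearSeries.ofScalarsSum] at h3
    rw [hp, h3]
    simp [smul_eq_mul]
  rw [heq]
  intro w hw
  apply hball.analyticOnNhd
  rw [EMetric.mem_ball, edist_zero_right]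
  refine lt_of_lt_of_le ?_ hrad
  rw [mem_ball, dist_zero_right] at hw
  rw [← _root_.ofReal_norm]
  exact (ENNReal.ofReal_lt_ofReal_iff (by positivity)).mpr (by simpa using hw)


/-- shifted coefficient sequence -/
noncomputable def cf (γ : ℕ → ℂ) (s : ℕ) : ℕ → ℂ := fun n => if n = 0 then 0 else γ (s + n)

lemma cf_bound (γ : ℕ → ℂ) {K q : ℝ} (hq : 0 < q)
    (hb : ∀ t, 1 ≤ t → ‖γ t‖ ≤ K * q ^ t) (s n : ℕ) :
    ‖cf γ s n‖ ≤ (max K 1 * q ^ s) * q ^ n := by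
  rcases Nat.eq_zero_or_pos n with rfl | hn
  · simp [cf]; positivity
  · have h1 : (1:ℕ) ≤ s + n := by omega
    have h2 := hb (s + n) h1
    have hne : n ≠ 0 := by omega
    simp only [cf, if_neg hne]
    calc ‖γ (s + n)‖ ≤ K * q ^ (s + n) := h2
      _ ≤ max K 1 * q ^ (s+n) := by
          apply mul_le_mul_of_nonneg_right (le_max_left _ _) (by positivity)
      _ = (max K 1 * q ^ s) * q ^ n := by rw [pow_add]; ring

lemma cf_shift (γ : ℕ → ℂ) (s : ℕ) (w : ℂ)
    (hsum : Summable fun n : ℕ => cf γ s n * w ^ n) :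
    ∑' n : ℕ, cf γ s n * w ^ n = ∑' j : ℕ, γ (s + j + 1) * w ^ (j + 1) := by
  have h := (Summable.sum_add_tsum_nat_add 1 hsum).symm
  simp only [Finset.sum_range_one] at h
  have h0 : cf γ s 0 * w ^ 0 = 0 := by simp [cf]
  rw [h, h0, zero_add]
  apply tsum_congr; intro j
  have hh : s + (j + 1) = s + j + 1 := by omega
  simp [cf, hh]

lemma cf_tail_summable {γ : ℕ → ℂ} {s : ℕ} {w : ℂ}
    (hsums : Summable fun n : ℕ => cf γ s n * w ^ n) :
    Summable fun j : ℕ => γ (s + j + 1) * w ^ (j + 1) := by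
  have h := (summable_nat_add_iff 1).2 hsums
  apply h.congr
  intro j
  have hh : s + (j + 1) = s + j + 1 := by omega
  simp [cf, hh]

lemma cf_split (γ : ℕ → ℂ) (s : ℕ) (w : ℂ)
    (hsum : Summable fun n : ℕ => cf γ 0 n * w ^ n)
    (hsums : Summable fun n : ℕ => cf γ s n * w ^ n) :
    ∑' n : ℕ, cf γ 0 n * w ^ n
      = (∑ t ∈ Finset.Icc 1 s, γ t * w ^ t) + w ^ s * ∑' n : ℕ, cf γ s n * w ^ n := by
  have h := (Summable.sum_add_tsum_nat_add (s+1) hsum).symm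
  rw [h]
  congr 1
  · have hsub : Finset.Icc 1 s ⊆ Finset.range (s+1) := by
      intro t ht; simp only [Finset.mem_Icc] at ht; simp only [Finset.mem_range]; omega
    have hvan : ∀ x ∈ Finset.range (s+1), x ∉ Finset.Icc 1 s → cf γ 0 x * w ^ x = 0 := by
      intro t ht hnt
      simp only [Finset.mem_range] at ht
      simp only [Finset.mem_Icc] at hnt
      have : t = 0 := by omega
      subst this; simp [cf]
    rw [← Finset.sum_subset hsub hvan]
    apply Finset.sum_congr rfl
    intro t ht
    simp only [Finset.mem_Icc] at ht
    have : t ≠ 0 := by omega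
    simp [cf, this]
  · rw [cf_shift γ s w hsums, ← Summable.tsum_mul_left _ (cf_tail_summable hsums)]
    apply tsum_congr; intro i
    have h1 : i + (s+1) = s + i + 1 := by omega
    rw [h1]
    have h2 : i + (s+1) ≠ 0 := by omega
    have h3 : (0:ℕ) + (s + i + 1) = s + i + 1 := by omega
    simp only [cf, if_neg (show s + i + 1 ≠ 0 by omega), h3]
    have h4 : s + i + 1 = s + (i + 1) := by omega
    rw [h4, pow_add]
    ring


lemma circleIntegral_add' {f g : ℂ → ℂ} {c : ℂ} {R : ℝ} (hf : CircleIntegrable f c R)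
    (hg : CircleIntegrable g c R) :
    (∮ z in C(c, R), (f z + g z)) = (∮ z in C(c, R), f z) + ∮ z in C(c, R), g z := by
  simp only [circleIntegral, smul_add, intervalIntegral.integral_add hf.out hg.out]

lemma onevar (F G : ℂ → ℂ) (H : ℕ → ℂ → ℂ) (γ : ℕ → ℂ)
    (hF : AnalyticOnNhd ℂ F (ball (0:ℂ) 4)) (hG : AnalyticOnNhd ℂ G (ball (0:ℂ) 4))
    (hH : ∀ s : ℕ, 1 ≤ s → AnalyticOnNhd ℂ (H s) (ball (0:ℂ) 4))
    (hG0 : G 0 = 0) (z₁ : ℂ) (hz₁ : z₁ ∈ ball (0:ℂ) 4) (hGz₁ : G z₁ ≠ 0)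
    (heq : ∀ s : ℕ, 1 ≤ s → ∀ z ∈ ball (0:ℂ) 4,
      F z = (∑ u ∈ Finset.Icc 1 s, γ u * G z ^ u) + H s z * G z ^ s) :
    ∃ K q : ℝ, 0 < K ∧ 0 < q ∧ ∀ t, 1 ≤ t → ‖γ t‖ ≤ K * q ^ t := by
  have hball : (0:ℂ) ∈ ball (0:ℂ) 4 := mem_ball_self (by norm_num)
  -- G is not eventually zero at 0
  have hGne_ev : ¬ ∀ᶠ z in 𝓝 (0:ℂ), G z = 0 := by
    intro hev
    have h1 := hG.eqOn_zero_of_preconnected_of_eventuallyEq_zero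
      (convex_ball (0:ℂ) 4).isPreconnected hball hev
    exact hGz₁ (h1 hz₁)
  have hA : AnalyticAt ℂ G 0 := hG 0 hball
  have hordne : analyticOrderAt G 0 ≠ ⊤ :=
    fun hcon => hGne_ev (analyticOrderAt_eq_top.mp hcon)
  obtain ⟨k, hk⟩ := WithTop.ne_top_iff_exists.mp hordne
  obtain ⟨W, hWa, hW0, hfac⟩ := hA.analyticOrderAt_eq_natCast.mp hk.symm
  have hfac' : ∀ᶠ z in 𝓝 (0:ℂ), G z = z ^ k * W z := by
    filter_upwards [hfac] with z hz
    simpa [smul_eq_mul] using hz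
  have hk1 : 1 ≤ k := by
    by_contra hcon
    have hk0 : k = 0 := by omega
    have h2 := hfac'.self_of_nhds
    rw [hk0, pow_zero, one_mul, hG0] at h2
    exact hW0 h2.symm
  have hev : ∀ᶠ z in 𝓝 (0:ℂ), G z = z ^ k * W z ∧ AnalyticAt ℂ W z ∧ W z ≠ 0 :=
    hfac'.and ((hWa.eventually_analyticAt).and (hWa.continuousAt.eventually_ne hW0))
  rw [Metric.eventually_nhds_iff] at hev
  obtain ⟨ε, hε, hεP⟩ := hev
  set δ' : ℝ := min (ε/2) 1 with hδ'def
  have hδ'pos : 0 < δ' := by positivity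
  have hδ'P : ∀ z ∈ closedBall (0:ℂ) δ', G z = z ^ k * W z ∧ AnalyticAt ℂ W z ∧ W z ≠ 0 := by
    intro z hz
    apply hεP
    rw [mem_closedBall] at hz
    calc dist z 0 ≤ δ' := hz
      _ ≤ ε/2 := min_le_left _ _
      _ < ε := by linarith
  have hδ'sub : closedBall (0:ℂ) δ' ⊆ ball (0:ℂ) 4 := by
    intro z hz
    rw [mem_closedBall] at hz
    rw [mem_ball]
    have : δ' ≤ 1 := min_le_right _ _
    linarith
  set δ : ℝ := δ' / 2 with hδdef
  have hδpos : 0 < δ := by positivity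
  have hδlt : δ < δ' := by linarith
  have hsphsub : sphere (0:ℂ) δ ⊆ ball (0:ℂ) δ' := fun z hz => by
    rw [mem_sphere, dist_zero_right] at hz; rw [mem_ball, dist_zero_right, hz]; exact hδlt
  have hcbsub : closedBall (0:ℂ) δ ⊆ ball (0:ℂ) δ' := fun z hz => by
    rw [mem_closedBall, dist_zero_right] at hz; rw [mem_ball, dist_zero_right]; linarith
  have hballsub : ball (0:ℂ) δ' ⊆ ball (0:ℂ) 4 := (ball_subset_closedBall).trans hδ'sub
  -- analyticity of W and derivatives
  have hWan : AnalyticOnNhd ℂ W (ball (0:ℂ) δ') := fun z hz =>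
    (hδ'P z (ball_subset_closedBall hz)).2.1
  have hWd : AnalyticOnNhd ℂ (deriv W) (ball (0:ℂ) δ') := hWan.deriv_of_isOpen isOpen_ball
  have hGd : AnalyticOnNhd ℂ (deriv G) (ball (0:ℂ) 4) := hG.deriv_of_isOpen isOpen_ball
  -- derivative formula
  have hGderiv : ∀ z ∈ ball (0:ℂ) δ',
      deriv G z = k * z ^ (k-1) * W z + z ^ k * deriv W z := by
    intro z hz
    have hWz : DifferentiableAt ℂ W z := (hWan z hz).differentiableAt
    have hev2 : G =ᶠ[𝓝 z] fun y => y ^ k * W y := by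
      apply Filter.eventuallyEq_of_mem (isOpen_ball.mem_nhds hz)
      intro y hy
      exact (hδ'P y (ball_subset_closedBall hy)).1
    rw [hev2.deriv_eq, deriv_fun_mul (differentiableAt_pow k) hWz, deriv_pow_field]
  -- nonvanishing of G away from 0
  have hGne : ∀ z ∈ closedBall (0:ℂ) δ', z ≠ 0 → G z ≠ 0 := by
    intro z hz hz0
    obtain ⟨h1, _, h3⟩ := hδ'P z hz
    rw [h1]
    exact mul_ne_zero (pow_ne_zero _ hz0) h3
  -- minimum of ‖G‖ on the sphere
  have hsne : (sphere (0:ℂ) δ).Nonempty := NormedSpace.sphere_nonempty.mpr hδpos.le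
  have hGcont : ContinuousOn (fun z => ‖G z‖) (sphere (0:ℂ) δ) :=
    (hG.continuousOn.mono ((hsphsub.trans hballsub))).norm
  obtain ⟨zm, hzm, hmin⟩ := (isCompact_sphere (0:ℂ) δ).exists_isMinOn hsne hGcont
  set m : ℝ := ‖G zm‖ with hmdef
  have hzmne : zm ≠ 0 := by
    intro hcon
    rw [mem_sphere, dist_zero_right, hcon] at hzm
    simp at hzm; linarith
  have hm : 0 < m := by
    rw [hmdef, norm_pos_iff]
    exact hGne zm ((hsphsub.trans ball_subset_closedBall) hzm) hzmne
  -- maximum of ‖F * deriv G‖ on the sphere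
  have hFGcont : ContinuousOn (fun z => ‖F z * deriv G z‖) (sphere (0:ℂ) δ) :=
    ((hF.continuousOn.mono (hsphsub.trans hballsub)).mul
      (hGd.continuousOn.mono (hsphsub.trans hballsub))).norm
  obtain ⟨zM, hzM, hmax⟩ := (isCompact_sphere (0:ℂ) δ).exists_isMaxOn hsne hFGcont
  set CF : ℝ := ‖F zM * deriv G zM‖ + 1 with hCFdef
  have hCF : 0 < CF := by positivity
  -- key integral identity
  have key : ∀ t : ℕ, 1 ≤ t →
      (∮ z in C(0, δ), F z * deriv G z / G z ^ (t+1)) = 2 * π * Complex.I * k * γ t := by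
    intro t ht
    set Jset := (Finset.Icc 1 (t+1)).erase t with hJ
    set Φ : ℂ → ℂ := fun z => ∑ u ∈ Jset, (γ u / ((u:ℂ) - (t:ℂ))) * G z ^ ((u:ℤ) - (t:ℤ)) with hΦ
    set Φd : ℂ → ℂ := fun z => ∑ u ∈ Jset, γ u * (G z ^ ((u:ℤ) - (t:ℤ) - 1) * deriv G z) with hΦd
    set B : ℂ → ℂ := fun z => H (t+1) z * deriv G z + γ t * (deriv W z / W z) with hB
    have hsph : ∀ z ∈ sphere (0:ℂ) δ,
        z ≠ 0 ∧ G z ≠ 0 ∧ W z ≠ 0 ∧ z ∈ ball (0:ℂ) 4 ∧ z ∈ ball (0:ℂ) δ' := by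
      intro z hz
      have hzb' : z ∈ ball (0:ℂ) δ' := hsphsub hz
      have hzcb : z ∈ closedBall (0:ℂ) δ' := ball_subset_closedBall hzb'
      have hzne : z ≠ 0 := by
        intro hcon; rw [mem_sphere, dist_zero_right, hcon] at hz; simp at hz; linarith
      exact ⟨hzne, hGne z hzcb hzne, (hδ'P z hzcb).2.2, hballsub hzb', hzb'⟩
    -- derivative of the multi-valued primitive
    have hder : ∀ z ∈ sphere (0:ℂ) δ, HasDerivAt Φ (Φd z) z := by
      intro z hz
      obtain ⟨hz0, hGz, hWz, hz4, hzδ'⟩ := hsph z hz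
      rw [hΦ, hΦd]
      apply HasDerivAt.fun_sum
      intro u hu
      have hGder : HasDerivAt G (deriv G z) z := (hG z hz4).differentiableAt.hasDerivAt
      have h2 := hasDerivAt_zpow ((u:ℤ) - (t:ℤ)) (G z) (Or.inl hGz)
      have h1 : HasDerivAt (fun y => G y ^ ((u:ℤ) - (t:ℤ)))
          ((((u:ℤ) - (t:ℤ) : ℤ) : ℂ) * G z ^ ((u:ℤ) - (t:ℤ) - 1) * deriv G z) z := by
        have h3 := h2.comp z hGder
        exact h3
      have h4 := h1.const_mul (γ u / ((u:ℂ) - (t:ℂ)))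
      have hut : u ≠ t := Finset.ne_of_mem_erase hu
      have hne : ((u:ℂ) - (t:ℂ)) ≠ 0 := by
        intro hcon
        exact hut (by exact_mod_cast sub_eq_zero.mp hcon)
      have hcast : (((u:ℤ) - (t:ℤ) : ℤ) : ℂ) = (u:ℂ) - (t:ℂ) := by push_cast; ring
      refine h4.congr_deriv ?_
      rw [hcast]
      field_simp
    -- circle integral of the derivative vanishes
    have step2 : (∮ z in C(0, δ), Φd z) = 0 :=
      circleIntegral.integral_eq_zero_of_hasDerivWithinAt hδpos.le
        (fun z hz => (hder z hz).hasDerivWithinAt)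
    -- circle integral of the analytic part vanishes
    have hBcont : ContinuousOn B (closedBall (0:ℂ) δ) := by
      rw [hB]
      have hsub1 : closedBall (0:ℂ) δ ⊆ ball (0:ℂ) δ' := hcbsub
      have hsub2 : closedBall (0:ℂ) δ ⊆ ball (0:ℂ) 4 := hsub1.trans hballsub
      apply ContinuousOn.add
      · exact ((hH (t+1) (by omega)).continuousOn.mono hsub2).mul
          (hGd.continuousOn.mono hsub2)
      · apply ContinuousOn.mul continuousOn_const
        apply ContinuousOn.div (hWd.continuousOn.mono hsub1) (hWan.continuousOn.mono hsub1)
        intro z hz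
        exact (hδ'P z (hsub1.trans ball_subset_closedBall <| hz)).2.2
    have hBdiff : ∀ z ∈ ball (0:ℂ) δ \ (∅ : Set ℂ), DifferentiableAt ℂ B z := by
      intro z hz
      rw [diff_empty] at hz
      have hzδ' : z ∈ ball (0:ℂ) δ' := hcbsub (ball_subset_closedBall hz)
      have h4 : z ∈ ball (0:ℂ) 4 := hballsub hzδ'
      rw [hB]
      apply DifferentiableAt.add
      · exact ((hH (t+1) (by omega)) z h4).differentiableAt.mul (hGd z h4).differentiableAt
      · apply DifferentiableAt.const_mul
        exact ((hWd z hzδ').differentiableAt.div (hWan z hzδ').differentiableAt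
          ((hδ'P z (ball_subset_closedBall hzδ')).2.2))
    have step3 : (∮ z in C(0, δ), B z) = 0 :=
      Complex.circleIntegral_eq_zero_of_differentiable_on_off_countable hδpos.le
        countable_empty hBcont hBdiff
    -- the residue term
    have step4 : (∮ z in C(0, δ), γ t * (k:ℂ) / z) = 2 * π * Complex.I * k * γ t := by
      have h1 : (fun z : ℂ => γ t * (k:ℂ) / z) = fun z : ℂ => (γ t * (k:ℂ)) * (z - 0)⁻¹ := by
        funext z; rw [sub_zero, div_eq_mul_inv]
      rw [h1, circleIntegral.integral_const_mul,
        circleIntegral.integral_sub_center_inv 0 (ne_of_gt hδpos)]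
      ring
    -- pointwise decomposition on the circle
    have step5 : ∀ z ∈ sphere (0:ℂ) δ,
        F z * deriv G z / G z ^ (t+1) = Φd z + (B z + γ t * (k:ℂ) / z) := by
      intro z hz
      obtain ⟨hz0, hGz, hWz, hz4, hzδ'⟩ := hsph z hz
      have hFz := heq (t+1) (by omega) z hz4
      have hGfac := (hδ'P z (ball_subset_closedBall hzδ')).1
      have hGder := hGderiv z hzδ'
      have hGz' : G z ^ (t+1) ≠ 0 := pow_ne_zero _ hGz
      have ht' : t ∈ Finset.Icc 1 (t+1) := by simp [Finset.mem_Icc]; omega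
      have hAG : deriv G z / G z = (k:ℂ)/z + deriv W z / W z := by
        have hzk : (z:ℂ)^k = z^(k-1) * z := by rw [← pow_succ]; congr 1; omega
        rw [hGder, hGfac, hzk]
        field_simp
      have hzterm : γ t * G z ^ t * deriv G z / G z ^ (t+1)
          = γ t * ((k:ℂ)/z + deriv W z / W z) := by
        rw [← hAG, pow_succ]
        field_simp
      have hzpow : ∀ u ∈ Jset, γ u * G z ^ u * deriv G z / G z ^ (t+1)
          = γ u * (G z ^ ((u:ℤ) - (t:ℤ) - 1) * deriv G z) := by
        intro u hu
        rw [div_eq_iff hGz']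
        have h2 : (G z) ^ (t+1) = G z ^ ((t:ℤ)+1) := by
          rw [← zpow_natCast]; congr 1
        have h1 : (G z) ^ u = G z ^ (u:ℤ) := (zpow_natCast _ _).symm
        have h3 : G z ^ ((u:ℤ) - (t:ℤ) - 1) * G z ^ ((t:ℤ)+1) = G z ^ (u:ℤ) := by
          rw [← zpow_add₀ hGz]; congr 1; ring
        calc γ u * G z ^ u * deriv G z = γ u * deriv G z * G z ^ (u:ℤ) := by rw [h1]; ring
          _ = γ u * deriv G z * (G z ^ ((u:ℤ) - (t:ℤ) - 1) * G z ^ ((t:ℤ)+1)) := by rw [h3]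
          _ = γ u * (G z ^ ((u:ℤ) - (t:ℤ) - 1) * deriv G z) * G z ^ (t+1) := by rw [← h2]; ring
      have hHterm : H (t+1) z * G z ^ (t+1) * deriv G z / G z ^ (t+1)
          = H (t+1) z * deriv G z := by
        field_simp
      calc F z * deriv G z / G z ^ (t+1)
          = (γ t * G z ^ t + ∑ u ∈ Jset, γ u * G z ^ u
              + H (t+1) z * G z ^ (t+1)) * deriv G z / G z ^ (t+1) := by
            rw [hFz, ← Finset.add_sum_erase _ _ ht']
        _ = γ t * G z ^ t * deriv G z / G z ^ (t+1)
            + (∑ u ∈ Jset, γ u * G z ^ u * deriv G z / G z ^ (t+1))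
            + H (t+1) z * G z ^ (t+1) * deriv G z / G z ^ (t+1) := by
            rw [add_mul, add_mul, add_div, add_div, Finset.sum_mul, Finset.sum_div]
        _ = γ t * ((k:ℂ)/z + deriv W z / W z)
            + (∑ u ∈ Jset, γ u * (G z ^ ((u:ℤ) - (t:ℤ) - 1) * deriv G z))
            + H (t+1) z * deriv G z := by
            rw [hzterm, hHterm, Finset.sum_congr rfl hzpow]
        _ = Φd z + (B z + γ t * (k:ℂ) / z) := by
            rw [hΦd, hB]
            ring
    -- integrability of the pieces
    have hΦdInt : CircleIntegrable Φd 0 δ := by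
      apply ContinuousOn.circleIntegrable hδpos.le
      rw [hΦd]
      apply continuousOn_finset_sum
      intro u hu
      apply ContinuousOn.mul continuousOn_const
      apply ContinuousOn.mul
      · apply ContinuousOn.zpow₀ (hG.continuousOn.mono (hsphsub.trans hballsub))
        intro z hz
        exact Or.inl (hsph z hz).2.1
      · exact hGd.continuousOn.mono (hsphsub.trans hballsub)
    have hBInt : CircleIntegrable B 0 δ := by
      apply ContinuousOn.circleIntegrable hδpos.le
      exact hBcont.mono sphere_subset_closedBall
    have hResInt : CircleIntegrable (fun z : ℂ => γ t * (k:ℂ) / z) 0 δ := by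
      apply ContinuousOn.circleIntegrable hδpos.le
      apply ContinuousOn.div continuousOn_const continuousOn_id
      intro z hz
      exact (hsph z hz).1
    calc (∮ z in C(0, δ), F z * deriv G z / G z ^ (t+1))
        = ∮ z in C(0, δ), (Φd z + (B z + γ t * (k:ℂ) / z)) :=
          circleIntegral.integral_congr hδpos.le (fun z hz => step5 z hz)
      _ = (∮ z in C(0, δ), Φd z) + ∮ z in C(0, δ), (B z + γ t * (k:ℂ) / z) :=
          circleIntegral_add' hΦdInt (hBInt.add hResInt)
      _ = (∮ z in C(0, δ), Φd z) + ((∮ z in C(0, δ), B z) + ∮ z in C(0, δ), γ t * (k:ℂ) / z) := by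
          rw [circleIntegral_add' hBInt hResInt]
      _ = 2 * π * Complex.I * k * γ t := by
          rw [step2, step3, step4]; ring
  -- final bound
  refine ⟨δ * CF / m, m⁻¹, by positivity, by positivity, ?_⟩
  intro t ht
  have hkey := key t ht
  have hbound : ∀ z ∈ sphere (0:ℂ) δ, ‖F z * deriv G z / G z ^ (t+1)‖ ≤ CF / m ^ (t+1) := by
    intro z hz
    rw [norm_div, norm_pow]
    apply div_le_div₀ (by positivity) ?_ (by positivity) ?_
    · calc ‖F z * deriv G z‖ ≤ ‖F zM * deriv G zM‖ := isMaxOn_iff.mp hmax z hz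
        _ ≤ CF := by rw [hCFdef]; linarith
    · exact pow_le_pow_left₀ hm.le (isMinOn_iff.mp hmin z hz) (t+1)
  have hIbound := circleIntegral.norm_integral_le_of_norm_le_const hδpos.le hbound
  rw [hkey] at hIbound
  have hnorm : ‖(2:ℂ) * (π:ℂ) * Complex.I * (k:ℂ) * γ t‖ = 2 * π * (k:ℝ) * ‖γ t‖ := by
    simp only [norm_mul, Complex.norm_I, Complex.norm_natCast, Complex.norm_real,
      Real.norm_eq_abs, mul_one, Complex.norm_ofNat]
    rw [_root_.abs_of_nonneg Real.pi_nonneg]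
  rw [hnorm] at hIbound
  have hπ := Real.pi_pos
  have hk0 : (1:ℝ) ≤ (k:ℝ) := by exact_mod_cast hk1
  have hkpos : (0:ℝ) < (k:ℝ) := by linarith
  have hmp : 0 < m ^ (t+1) := pow_pos hm _
  have h6 : (0:ℝ) < 2 * π * (k:ℝ) := by positivity
  have hfinal : ‖γ t‖ ≤ δ * (CF / m ^ (t+1)) := by
    have h9 : ‖γ t‖ ≤ (2 * π * δ * (CF / m ^ (t+1))) / (2 * π * (k:ℝ)) := by
      rw [le_div_iff₀ h6]
      calc ‖γ t‖ * (2 * π * (k:ℝ)) = 2 * π * (k:ℝ) * ‖γ t‖ := by ring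
        _ ≤ 2 * π * δ * (CF / m ^ (t+1)) := hIbound
    have h7 : (2 * π * δ * (CF / m ^ (t+1))) / (2 * π * (k:ℝ))
        = (δ * (CF / m ^ (t+1))) / (k:ℝ) := by
      field_simp
    have h8 : (δ * (CF / m ^ (t+1))) / (k:ℝ) ≤ δ * (CF / m ^ (t+1)) :=
      div_le_self (by positivity) hk0
    calc ‖γ t‖ ≤ (2 * π * δ * (CF / m ^ (t+1))) / (2 * π * (k:ℝ)) := h9
      _ = (δ * (CF / m ^ (t+1))) / (k:ℝ) := h7
      _ ≤ δ * (CF / m ^ (t+1)) := h8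
  calc ‖γ t‖ ≤ δ * (CF / m ^ (t+1)) := hfinal
    _ = δ * CF / m * m⁻¹ ^ t := by
        rw [inv_pow, pow_succ']
        field_simp

/-- Intermediate conclusion in the proof of the key Lemma: if
`f = γ₁ g + ⋯ + γ_s g^s + h_s g^s` on `U` for every `s ≥ 1`, with `g` not identically
zero, then the power series `θ(λ) = Σ_{j≥1} γ_j λ^j` has a positive radius of
convergence and `f = θ ∘ g` on a neighborhood of `a`. -/
theorem f_eq_theta_comp_g_of_formal_series_relation
    (n : ℕ) (hn : 1 ≤ n) (U : Set (Fin n → ℂ)) (hU : IsOpen U)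
    (hUconn : IsConnected U) (a : Fin n → ℂ) (haU : a ∈ U)
    (f g : (Fin n → ℂ) → ℂ)
    (hf : AnalyticOnNhd ℂ f U) (hg : AnalyticOnNhd ℂ g U)
    (hfa : f a = 0) (hga : g a = 0)
    (hgnz : ¬ ∀ x ∈ U, g x = 0)
    (γ : ℕ → ℂ)
    (h : ℕ → (Fin n → ℂ) → ℂ)
    (hh : ∀ s : ℕ, 1 ≤ s → AnalyticOnNhd ℂ (h s) U)
    (hser : ∀ s : ℕ, 1 ≤ s → ∀ x ∈ U,
      f x = (∑ t ∈ Finset.Icc 1 s, γ t * g x ^ t) + h s x * g x ^ s) :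
    ∃ r : ℝ, 0 < r ∧
      (∀ lam : ℂ, ‖lam‖ < r → Summable fun j : ℕ => ‖γ (j + 1) * lam ^ (j + 1)‖) ∧
      ∃ Ω : Set (Fin n → ℂ), IsOpen Ω ∧ a ∈ Ω ∧
        ∀ x ∈ Ω, f x = ∑' j : ℕ, γ (j + 1) * g x ^ (j + 1) := by
  obtain ⟨ε, hεpos, hεsub⟩ := Metric.isOpen_iff.mp hU a haU
  -- a point near `a` where `g ≠ 0`
  have hx₀ : ∃ x₀ ∈ ball a (ε/5), g x₀ ≠ 0 := by
    by_contra hcon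
    push_neg at hcon
    have hev : ∀ᶠ x in 𝓝 a, g x = 0 :=
      Filter.eventually_of_mem (ball_mem_nhds a (by positivity)) hcon
    have h1 := hg.eqOn_zero_of_preconnected_of_eventuallyEq_zero
      hUconn.isPreconnected haU hev
    exact hgnz fun x hx => h1 hx
  obtain ⟨x₀, hx₀b, hgx₀⟩ := hx₀
  set v := x₀ - a with hv
  have hvnorm : ‖v‖ < ε/5 := by
    rw [hv, ← dist_eq_norm]
    exact mem_ball.mp hx₀b
  set c₀ : ℂ → (Fin n → ℂ) := fun z => a + z • v with hc₀
  have hc₀an : AnalyticOnNhd ℂ c₀ (ball (0:ℂ) 4) := by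
    intro z hz
    exact analyticAt_const.add ((analyticAt_id).smul analyticAt_const)
  have hmaps : MapsTo c₀ (ball (0:ℂ) 4) U := by
    intro z hz
    apply hεsub
    rw [mem_ball]
    have hz4 : ‖z‖ < 4 := by rwa [mem_ball, dist_zero_right] at hz
    calc dist (c₀ z) a = ‖z • v‖ := by
          rw [dist_eq_norm, hc₀]; congr 1; simp
      _ = ‖z‖ * ‖v‖ := norm_smul z v
      _ ≤ 4 * ‖v‖ := by
          apply mul_le_mul_of_nonneg_right hz4.le (norm_nonneg _)
      _ < ε := by linarith
  have h1in : (1:ℂ) ∈ ball (0:ℂ) 4 := by norm_num [mem_ball]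
  have hG1 : (g ∘ c₀) 1 ≠ 0 := by
    have : c₀ 1 = x₀ := by rw [hc₀]; simp [hv]
    simpa [this] using hgx₀
  obtain ⟨K, q, hK, hq, hKq⟩ := onevar (f ∘ c₀) (g ∘ c₀) (fun s => h s ∘ c₀) γ
    (hf.comp hc₀an hmaps) (hg.comp hc₀an hmaps) (fun s hs => (hh s hs).comp hc₀an hmaps)
    (by simp [hc₀, hga]) 1 h1in hG1
    (fun s hs z hz => by simpa using hser s hs (c₀ z) (hmaps hz))
  -- the coefficient bound for the shifted sequences
  have hbs : ∀ s nn, ‖cf γ s nn‖ ≤ (max K 1 * q ^ s) * q ^ nn := fun s nn =>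
    cf_bound γ hq hKq s nn
  refine ⟨q⁻¹/2, by positivity, ?_, ?_⟩
  · -- summability
    intro lam hlam
    have hlam' : ‖lam‖ < q⁻¹ := by
      have : q⁻¹/2 < q⁻¹ := by
        have : (0:ℝ) < q⁻¹ := by positivity
        linarith
      linarith
    have hs0 : Summable fun nn : ℕ => ‖cf γ 0 nn * lam ^ nn‖ :=
      my_summable hq (hbs 0) hlam'
    have hs1 : Summable fun j : ℕ => ‖cf γ 0 (j+1) * lam ^ (j+1)‖ :=
      (summable_nat_add_iff 1).2 hs0
    apply hs1.congr
    intro j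
    simp [cf]
  · -- the neighborhood
    have hcg : ContinuousAt g a := (hg a haU).continuousAt
    have hpre : {y | ‖g y‖ < q⁻¹/2} ∈ 𝓝 a := by
      have h2 : ball (0:ℂ) (q⁻¹/2) ∈ 𝓝 (g a) := by
        rw [hga]; exact ball_mem_nhds _ (by positivity)
      have h3 := hcg.preimage_mem_nhds h2
      apply Filter.mem_of_superset h3
      intro y hy
      simpa [mem_ball, dist_zero_right] using hy
    obtain ⟨ε₂', hε₂'pos, hε₂'⟩ := Metric.mem_nhds_iff.mp hpre
    set ε₂ : ℝ := min ε₂' ε with hε₂def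
    have hε₂pos : 0 < ε₂ := by positivity
    have hballU : ball a ε₂ ⊆ U := fun y hy =>
      hεsub (by rw [mem_ball] at hy ⊢; exact lt_of_lt_of_le hy (min_le_right _ _))
    have hgsmall : ∀ y ∈ ball a ε₂, ‖g y‖ < q⁻¹/2 := by
      intro y hy
      apply hε₂'
      rw [mem_ball] at hy ⊢
      exact lt_of_lt_of_le hy (min_le_left _ _)
    refine ⟨ball a (ε₂/2), isOpen_ball, mem_ball_self (by positivity), ?_⟩
    intro x hx
    -- the slice through `x`
    set cx : ℂ → (Fin n → ℂ) := fun z => a + z • (x - a) with hcx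
    have hcxan : AnalyticOnNhd ℂ cx (ball (0:ℂ) 2) := fun z hz =>
      analyticAt_const.add ((analyticAt_id).smul analyticAt_const)
    have hcxmaps : MapsTo cx (ball (0:ℂ) 2) (ball a ε₂) := by
      intro z hz
      rw [mem_ball]
      have hz2 : ‖z‖ < 2 := by rwa [mem_ball, dist_zero_right] at hz
      have hxa : ‖x - a‖ < ε₂/2 := by
        rw [← dist_eq_norm]; exact mem_ball.mp hx
      calc dist (cx z) a = ‖z • (x - a)‖ := by
            rw [dist_eq_norm, hcx]; congr 1; simp
        _ = ‖z‖ * ‖x - a‖ := norm_smul _ _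
        _ ≤ 2 * ‖x - a‖ := mul_le_mul_of_nonneg_right hz2.le (norm_nonneg _)
        _ < ε₂ := by linarith
    set Gx : ℂ → ℂ := fun z => g (cx z) with hGx
    have hGxan : AnalyticOnNhd ℂ Gx (ball (0:ℂ) 2) :=
      hg.comp hcxan (hcxmaps.mono_right hballU)
    have h0mem : (0:ℂ) ∈ ball (0:ℂ) 2 := mem_ball_self (by norm_num)
    have h1mem : (1:ℂ) ∈ ball (0:ℂ) 2 := by norm_num [mem_ball]
    have hcx1 : cx 1 = x := by rw [hcx]; simp
    have hcx0 : cx 0 = a := by rw [hcx]; simp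
    have hxball : x ∈ ball a ε₂ := by
      rw [mem_ball] at hx ⊢
      have := mem_ball.mp hx
      linarith [hε₂pos]
    have hxU : x ∈ U := hballU hxball
    -- summability facts
    have hGxsmall : ∀ z ∈ ball (0:ℂ) 2, ‖Gx z‖ < q⁻¹ := by
      intro z hz
      have := hgsmall (cx z) (hcxmaps hz)
      have h4 : (0:ℝ) < q⁻¹ := by positivity
      calc ‖Gx z‖ < q⁻¹/2 := this
        _ < q⁻¹ := by linarith
    -- the sum function θ
    set θfun : ℂ → ℂ := fun w => ∑' nn : ℕ, cf γ 0 nn * w ^ nn with hθ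
    have hθan : AnalyticOnNhd ℂ θfun (ball (0:ℂ) q⁻¹) := my_analytic hq (hbs 0)
    have hθshift : ∀ w : ℂ, ‖w‖ < q⁻¹ → θfun w = ∑' j : ℕ, γ (j+1) * w ^ (j+1) := by
      intro w hw
      have h8 := cf_shift γ 0 w ((my_summable hq (hbs 0) hw).of_norm)
      exact h8.trans (tsum_congr fun j => by norm_num)
    by_cases hcase : ∀ᶠ z in 𝓝 (0:ℂ), Gx z = 0
    · -- g x = 0, both sides vanish
      have hEq := hGxan.eqOn_zero_of_preconnected_of_eventuallyEq_zero
        (convex_ball (0:ℂ) 2).isPreconnected h0mem hcase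
      have hgx0 : g x = 0 := by
        have h9 : g (cx 1) = 0 := hEq h1mem
        rwa [hcx1] at h9
      have hfx0 : f x = 0 := by
        have h5 := hser 1 le_rfl x hxU
        rw [hgx0] at h5
        simpa using h5
      have hzero : ∀ j : ℕ, γ (j + 1) * g x ^ (j + 1) = 0 := by
        intro j; rw [hgx0]; simp
      rw [hfx0]
      exact ((tsum_congr hzero).trans tsum_zero).symm
    · -- main case : E ≡ 0 on the ball
      set E : ℂ → ℂ := fun z => f (cx z) - θfun (Gx z) with hE
      have hEan : AnalyticOnNhd ℂ E (ball (0:ℂ) 2) := by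
        apply AnalyticOnNhd.sub
        · exact hf.comp hcxan (hcxmaps.mono_right hballU)
        · apply hθan.comp hGxan
          intro z hz
          rw [mem_ball, dist_zero_right]
          exact hGxsmall z hz
      have hEfac : ∀ s : ℕ, 1 ≤ s → ∀ z ∈ ball (0:ℂ) 2,
          E z = Gx z ^ s * (h s (cx z) - ∑' nn : ℕ, cf γ s nn * (Gx z) ^ nn) := by
        intro s hs z hz
        have hw : ‖g (cx z)‖ < q⁻¹ := hGxsmall z hz
        have hsum0 : Summable fun nn : ℕ => cf γ 0 nn * (g (cx z)) ^ nn :=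
          (my_summable hq (hbs 0) hw).of_norm
        have hsums : Summable fun nn : ℕ => cf γ s nn * (g (cx z)) ^ nn :=
          (my_summable hq (hbs s) hw).of_norm
        have hsplit := cf_split γ s (g (cx z)) hsum0 hsums
        have hserz := hser s hs (cx z) (hballU (hcxmaps hz))
        have hgoal : f (cx z) - (∑' nn : ℕ, cf γ 0 nn * (g (cx z)) ^ nn)
            = g (cx z) ^ s * (h s (cx z) - ∑' nn : ℕ, cf γ s nn * (g (cx z)) ^ nn) := by
          rw [hserz, hsplit]; ring
        exact hgoal
      -- E vanishes in a neighborhood of 0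
      have hEev : ∀ᶠ z in 𝓝 (0:ℂ), E z = 0 := by
        by_contra hEne
        have hEa : AnalyticAt ℂ E 0 := hEan 0 h0mem
        have hordE : analyticOrderAt E 0 ≠ ⊤ := fun hcon => hEne (analyticOrderAt_eq_top.mp hcon)
        obtain ⟨N, hN⟩ := WithTop.ne_top_iff_exists.mp hordE
        obtain ⟨V, hVa, hV0, hVfac⟩ := hEa.analyticOrderAt_eq_natCast.mp hN.symm
        have hGxa : AnalyticAt ℂ Gx 0 := hGxan 0 h0mem
        have hordG : analyticOrderAt Gx 0 ≠ ⊤ := fun hcon => hcase (analyticOrderAt_eq_top.mp hcon)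
        obtain ⟨M, hM⟩ := WithTop.ne_top_iff_exists.mp hordG
        obtain ⟨Wx, hWxa, hWx0, hWxfac⟩ := hGxa.analyticOrderAt_eq_natCast.mp hM.symm
        have hGx0 : Gx 0 = 0 := by
          show g (cx 0) = 0
          rw [hcx0]; exact hga
        have hM1 : 1 ≤ M := by
          by_contra hcon
          have hM0 : M = 0 := by omega
          have h6 := hWxfac.self_of_nhds
          rw [hM0, pow_zero, one_smul, hGx0] at h6
          exact hWx0 h6.symm
        set s := N + 1 with hsdef
        set Jf : ℂ → ℂ := fun z => h s (cx z) - ∑' nn : ℕ, cf γ s nn * (Gx z) ^ nn with hJf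
        have hRsan : AnalyticOnNhd ℂ (fun w : ℂ => ∑' nn : ℕ, cf γ s nn * w ^ nn)
            (ball (0:ℂ) q⁻¹) := my_analytic hq (hbs s)
        have hJan : AnalyticAt ℂ Jf 0 := by
          apply AnalyticAt.sub
          · exact ((hh s (by omega)).comp hcxan (hcxmaps.mono_right hballU)) 0 h0mem
          · exact (hRsan.comp hGxan fun z hz => by
              rw [mem_ball, dist_zero_right]; exact hGxsmall z hz) 0 h0mem
        have hNle : N ≤ M * s := by
          have : s ≤ M * s := Nat.le_mul_of_pos_left s (by omega)
          omega
        have hpow : M * s - N ≠ 0 := by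
          have : s ≤ M * s := Nat.le_mul_of_pos_left s (by omega)
          omega
        have hb2 : ∀ᶠ z in 𝓝 (0:ℂ), z ∈ ball (0:ℂ) 2 := isOpen_ball.eventually_mem h0mem
        have hpunct : ∀ᶠ z in 𝓝[≠] (0:ℂ), V z = z ^ (M*s - N) * Wx z ^ s * Jf z := by
          have hall : ∀ᶠ z in 𝓝[≠] (0:ℂ),
              E z = (z - 0) ^ N • V z ∧ (Gx z = (z - 0) ^ M • Wx z ∧ z ∈ ball (0:ℂ) 2) :=
            mem_nhdsWithin_of_mem_nhds (hVfac.and (hWxfac.and hb2))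
          filter_upwards [hall, self_mem_nhdsWithin] with z hz hzne
          obtain ⟨hV, hW, hb⟩ := hz
          rw [mem_compl_iff, mem_singleton_iff] at hzne
          have hEz := hEfac s (by omega) z hb
          have hV' : E z = z ^ N * V z := by rw [hV]; simp [smul_eq_mul]
          have hW' : Gx z = z ^ M * Wx z := by rw [hW]; simp [smul_eq_mul]
          have hJz : E z = Gx z ^ s * Jf z := hEz
          rw [hV', hW'] at hJz
          have hzz : z ^ N * z ^ (M*s - N) = z ^ (M*s) := by
            rw [← pow_add]; congr 1; omega
          have hEz2 : z ^ N * (z ^ (M*s - N) * Wx z ^ s * Jf z) = z ^ N * V z := by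
            calc z ^ N * (z ^ (M*s - N) * Wx z ^ s * Jf z)
                = (z ^ N * z ^ (M*s - N)) * (Wx z ^ s * Jf z) := by ring
              _ = z ^ (M*s) * (Wx z ^ s * Jf z) := by rw [hzz]
              _ = (z ^ M * Wx z) ^ s * Jf z := by rw [mul_pow, pow_mul]; ring
              _ = z ^ N * V z := hJz.symm
          exact (mul_left_cancel₀ (pow_ne_zero N hzne) hEz2).symm
        have hVlim : Filter.Tendsto V (𝓝[≠] (0:ℂ)) (𝓝 (V 0)) :=
          hVa.continuousAt.continuousWithinAt
        have hRlim : Filter.Tendsto (fun z : ℂ => z ^ (M*s - N) * Wx z ^ s * Jf z)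
            (𝓝[≠] (0:ℂ)) (𝓝 0) := by
          have hcont : ContinuousAt (fun z : ℂ => z ^ (M*s - N) * Wx z ^ s * Jf z) 0 := by
            exact ((continuous_pow _).continuousAt.mul (hWxa.continuousAt.pow s)).mul
              hJan.continuousAt
          have h0val : (0:ℂ) ^ (M*s - N) * Wx 0 ^ s * Jf 0 = 0 := by
            rw [zero_pow hpow]; ring
          have := hcont.continuousWithinAt (s := {(0:ℂ)}ᶜ)
          rwa [ContinuousWithinAt, h0val] at this
        have hV0' : V 0 = 0 :=
          tendsto_nhds_unique (hVlim.congr' hpunct) hRlim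
        exact hV0 hV0'
      -- identity theorem on the ball
      have hEqOn := hEan.eqOn_zero_of_preconnected_of_eventuallyEq_zero
        (convex_ball (0:ℂ) 2).isPreconnected h0mem hEev
      have hE1 := hEqOn h1mem
      have hfeq : f x = θfun (g x) := by
        have : f (cx 1) - θfun (Gx 1) = 0 := hE1
        rw [sub_eq_zero] at this
        rw [← hcx1]
        exact this
      rw [hfeq]
      exact hθshift (g x) (by
        have := hgsmall x (by
          rw [mem_ball] at hx ⊢
          have : (0:ℝ) < ε₂ := hε₂pos
          calc dist x a < ε₂/2 := mem_ball.mp hx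
            _ < ε₂ := by linarith)
        have h7 : (0:ℝ) < q⁻¹ := by positivity
        linarith)
end

section
/- Let n ≥ 1, let U ⊆ ℂⁿ be open and connected, let a ∈ U, and let D, g : ℂⁿ → ℂ be analytic on U with g(a) = 0. Assume that for every natural number s there exists a function q_s : ℂⁿ → ℂ analytic on U such that D(x) = q_s(x)·g(x)^s for all x ∈ U. Then D is identically zero on U. -/
open Filter Topology

/-- 1D vanishing lemma: a function analytic at `0` divisible near `0` by every power of
an analytic function vanishing at `0` vanishes in a neighborhood of `0`. -/
lemma oneDim_vanish {f g : ℂ → ℂ} (hf : AnalyticAt ℂ f 0) (hgo : AnalyticAt ℂ g 0)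
    (hg0 : g 0 = 0)
    (hd : ∀ s : ℕ, ∃ q : ℂ → ℂ, AnalyticAt ℂ q 0 ∧ ∀ᶠ z in 𝓝 0, f z = q z * g z ^ s) :
    ∀ᶠ z in 𝓝 (0 : ℂ), f z = 0 := by
  by_contra hne
  have hord : analyticOrderAt f 0 ≠ ⊤ := fun h => hne (analyticOrderAt_eq_top.mp h)
  lift analyticOrderAt f 0 to ℕ using hord with m hm
  obtain ⟨h, hh, hh0, hfh⟩ := (hf.analyticOrderAt_eq_natCast (n := m)).mp hm.symm
  obtain ⟨q, hq, hfq⟩ := hd (m + 1)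
  -- g z = z * (dslope g 0 z)
  set w : ℂ → ℂ := dslope g 0 with hwdef
  have hw : AnalyticAt ℂ w 0 := by
    obtain ⟨p, hp⟩ := hgo
    exact (HasFPowerSeriesAt.has_fpower_series_dslope_fslope hp).analyticAt
  have hgz : ∀ z : ℂ, g z = z * w z := by
    intro z
    have := sub_smul_dslope g 0 z
    simp only [sub_zero, hg0, smul_eq_mul] at this
    rw [hwdef, this]
  have key : ∀ᶠ z in 𝓝[≠] (0 : ℂ), h z = z * (q z * w z ^ (m + 1)) := by
    filter_upwards [eventually_nhdsWithin_of_eventually_nhds (hfh.and hfq),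
      self_mem_nhdsWithin] with z hz hz0
    obtain ⟨h1, h2⟩ := hz
    have hzne : (z : ℂ) ≠ 0 := hz0
    have : z ^ m * h z = z ^ m * (z * (q z * w z ^ (m + 1))) := by
      have h1' : f z = z ^ m * h z := by simpa [smul_eq_mul] using h1
      rw [← h1', h2, hgz z]; ring
    exact mul_left_cancel₀ (pow_ne_zero m hzne) this
  have t1 : Tendsto h (𝓝[≠] (0 : ℂ)) (𝓝 (h 0)) :=
    hh.continuousAt.continuousWithinAt.tendsto
  have t2 : Tendsto (fun z : ℂ => z * (q z * w z ^ (m + 1))) (𝓝[≠] (0 : ℂ)) (𝓝 0) := by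
    have hc : ContinuousAt (fun z : ℂ => z * (q z * w z ^ (m + 1))) 0 :=
      continuousAt_id.mul (hq.continuousAt.mul (hw.continuousAt.pow _))
    have := hc.tendsto.mono_left (nhdsWithin_le_nhds (s := {(0:ℂ)}ᶜ))
    simpa using this
  exact hh0 (tendsto_nhds_unique (t1.congr' key) t2)

/-- Vanishing principle: on a connected open set `U ⊆ ℂⁿ`, an analytic function `D`
divisible by every power of an analytic function `g` vanishing at a point `a ∈ U` is
identically zero. -/
theorem eq_zero_of_divisible_by_all_powers
    (n : ℕ) (hn : 1 ≤ n) (U : Set (Fin n → ℂ)) (hU : IsOpen U)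
    (hUconn : IsConnected U) (a : Fin n → ℂ) (haU : a ∈ U)
    (D g : (Fin n → ℂ) → ℂ)
    (hD : AnalyticOnNhd ℂ D U) (hg : AnalyticOnNhd ℂ g U) (hga : g a = 0)
    (hdiv : ∀ s : ℕ, ∃ q : (Fin n → ℂ) → ℂ, AnalyticOnNhd ℂ q U ∧
      ∀ x ∈ U, D x = q x * g x ^ s) :
    ∀ x ∈ U, D x = 0 := by
  -- a ball around a inside U
  obtain ⟨ρ, hρpos, hball⟩ := Metric.isOpen_iff.mp hU a haU
  -- D vanishes on the ball
  have hball_zero : ∀ y ∈ Metric.ball a ρ, D y = 0 := by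
    intro y hy
    rcases eq_or_ne y a with rfl | hya
    · obtain ⟨q, _, hq⟩ := hdiv 1
      simp [hq _ haU, hga]
    -- the complex line through a and y
    set v : Fin n → ℂ := y - a with hv
    have hvne : v ≠ 0 := sub_ne_zero.mpr hya
    have hvnorm : (0:ℝ) < ‖v‖ := norm_pos_iff.mpr hvne
    set l : ℂ → (Fin n → ℂ) := fun t => a + t • v with hl
    have hl_an : ∀ t : ℂ, AnalyticAt ℂ l t := fun t =>
      analyticAt_const.add ((analyticAt_id).smul analyticAt_const)
    have hl0 : l 0 = a := by simp [hl]
    have hdist : ∀ t : ℂ, dist (l t) a = ‖t‖ * ‖v‖ := by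
      intro t; simp [hl, dist_eq_norm, norm_smul]
    -- the disk where the line stays in the ball
    set V : Set ℂ := Metric.ball (0:ℂ) (ρ / ‖v‖) with hV
    have hmaps : ∀ t ∈ V, l t ∈ U := by
      intro t ht
      apply hball
      rw [Metric.mem_ball, hdist]
      rw [hV, Metric.mem_ball, dist_zero_right] at ht
      calc ‖t‖ * ‖v‖ < (ρ / ‖v‖) * ‖v‖ := by
            exact mul_lt_mul_of_pos_right ht hvnorm
        _ = ρ := div_mul_cancel₀ ρ (ne_of_gt hvnorm)
    have h0V : (0:ℂ) ∈ V := by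
      rw [hV, Metric.mem_ball, dist_self]; positivity
    have h1V : (1:ℂ) ∈ V := by
      rw [hV, Metric.mem_ball, dist_zero_right, norm_one]
      rw [lt_div_iff₀ hvnorm, one_mul]
      simpa [hv, dist_eq_norm] using hy
    have hUnhds : ∀ t ∈ V, U ∈ 𝓝 (l t) := fun t ht => hU.mem_nhds (hmaps t ht)
    -- restricted functions
    have hDl : AnalyticOnNhd ℂ (D ∘ l) V := fun t ht =>
      (hD _ (hmaps t ht)).comp (hl_an t)
    have hgl : AnalyticAt ℂ (g ∘ l) 0 := (hg _ (hl0 ▸ hmaps 0 h0V)).comp (hl_an 0)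
    have hgl0 : (g ∘ l) 0 = 0 := by simp [Function.comp, hl0, hga]
    have hev : ∀ᶠ t in 𝓝 (0:ℂ), l t ∈ U := by
      have : Tendsto l (𝓝 0) (𝓝 a) := hl0 ▸ (hl_an 0).continuousAt.tendsto
      exact this.eventually_mem (hU.mem_nhds haU)
    have hd1 : ∀ s : ℕ, ∃ q : ℂ → ℂ, AnalyticAt ℂ q 0 ∧
        ∀ᶠ z in 𝓝 0, (D ∘ l) z = q z * (g ∘ l) z ^ s := by
      intro s
      obtain ⟨q, hqan, hq⟩ := hdiv s
      refine ⟨q ∘ l, (hqan _ (hl0 ▸ hmaps 0 h0V)).comp (hl_an 0), ?_⟩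
      filter_upwards [hev] with t ht
      exact hq (l t) ht
    -- 1D vanishing near 0, then identity theorem on the disk V
    have hev0 : ∀ᶠ z in 𝓝 (0:ℂ), (D ∘ l) z = 0 :=
      oneDim_vanish (hDl 0 h0V) hgl hgl0 hd1
    have hzero : ∀ t ∈ V, (D ∘ l) t = 0 :=
      fun t ht => hDl.eqOn_zero_of_preconnected_of_eventuallyEq_zero
        ((convex_ball _ _).isPreconnected) h0V hev0 ht
    have := hzero 1 h1V
    simpa [Function.comp, hl, hv] using this
  -- identity theorem on U
  have hev : D =ᶠ[𝓝 a] 0 := by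
    filter_upwards [Metric.ball_mem_nhds a hρpos] with y hy
    exact hball_zero y hy
  exact fun x hx =>
    hD.eqOn_zero_of_preconnected_of_eventuallyEq_zero hUconn.isPreconnected haU hev hx
end

section
/- Let n ≥ 1 be an integer, let X := {(x,y,z) ∈ ℂ³ : x^{n+1} = y·z}, and let F : ℂ³ → ℂ² be given by F(x,y,z) = (x,y). Then for every t ∈ ℂ with t ≠ 0, the point (t,0) does not belong to F(X). Consequently, for every subset U ⊆ ℂ³, the set F(U ∩ X) is not a neighborhood of (0,0) in ℂ²; in particular F restricted to X is not locally open at the origin. -/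
/-- For `X = {x^{n+1} = y z} ⊆ ℂ³` and the projection `F(x,y,z) = (x,y)`, no point
`(t,0)` with `t ≠ 0` is in `F(X)`; consequently `F(U ∩ X)` is never a neighborhood of
the origin, so `F│X` is not locally open at the origin. -/
theorem projection_on_hypersurface_not_locally_open
    (n : ℕ) (hn : 1 ≤ n)
    (X : Set (ℂ × ℂ × ℂ)) (hX : X = {p : ℂ × ℂ × ℂ | p.1 ^ (n + 1) = p.2.1 * p.2.2})
    (F : ℂ × ℂ × ℂ → ℂ × ℂ) (hF : ∀ p : ℂ × ℂ × ℂ, F p = (p.1, p.2.1)) :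
    (∀ t : ℂ, t ≠ 0 → ((t, 0) : ℂ × ℂ) ∉ F '' X) ∧
    (∀ U : Set (ℂ × ℂ × ℂ), F '' (U ∩ X) ∉ nhds ((0, 0) : ℂ × ℂ)) := by
  have key : ∀ t : ℂ, t ≠ 0 → ((t, 0) : ℂ × ℂ) ∉ F '' X := by
    intro t ht hmem
    obtain ⟨p, hpX, hp⟩ := hmem
    rw [hF p] at hp
    have h1 : p.1 = t := congrArg Prod.fst hp
    have h2 : p.2.1 = 0 := congrArg Prod.snd hp
    rw [hX] at hpX
    have : t ^ (n + 1) = 0 := by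
      rw [← h1]; rw [hpX, h2, zero_mul]
    exact ht (pow_eq_zero_iff (Nat.succ_ne_zero n) |>.mp this)
  refine ⟨key, fun U hU => ?_⟩
  obtain ⟨ε, hε, hball⟩ := Metric.mem_nhds_iff.mp hU
  set t : ℂ := ((ε / 2 : ℝ) : ℂ) with htdef
  have ht : t ≠ 0 := by
    rw [htdef, Ne, Complex.ofReal_eq_zero]
    exact ne_of_gt (half_pos hε)
  have hmem : ((t, 0) : ℂ × ℂ) ∈ Metric.ball ((0, 0) : ℂ × ℂ) ε := by
    rw [Metric.mem_ball]
    have hd : dist ((t, 0) : ℂ × ℂ) ((0, 0) : ℂ × ℂ) = dist t (0 : ℂ) := by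
      rw [Prod.dist_eq]
      simp
    rw [hd, dist_zero_right, htdef, Complex.norm_real, Real.norm_eq_abs,
      abs_of_pos (half_pos hε)]
    linarith
  have : ((t, 0) : ℂ × ℂ) ∈ F '' (U ∩ X) := hball hmem
  exact key t ht (Set.image_mono (f := F) Set.inter_subset_right this)
end

section
/- Let F : ℂ² → ℂ² be given by F(x,y) = (x³y³, x²y). Then: (i) the image F(ℂ²) meets the union of the punctured coordinate axes {(u,0) : u ≠ 0} ∪ {(0,v) : v ≠ 0} in the empty set, so for every subset U ⊆ ℂ², F(U) is not a neighborhood of (0,0) in ℂ² and hence F is not locally open at the origin; and (ii) the Jacobian determinant of F at (x,y), namely ∂₁(x³y³)·∂₂(x²y) − ∂₂(x³y³)·∂₁(x²y), equals −3x⁴y³ and is therefore not identically zero on ℂ². -/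
/-- For `F(x,y) = (x³y³, x²y)`: (i) the image of `F` misses the punctured coordinate
axes, so no image `F(U)` is a neighborhood of the origin and `F` is not locally open at
the origin; (ii) the Jacobian determinant equals `-3x⁴y³`, hence is not identically
zero. -/
theorem example_not_open_not_curve
    (F : ℂ × ℂ → ℂ × ℂ) (hF : ∀ p : ℂ × ℂ, F p = (p.1 ^ 3 * p.2 ^ 3, p.1 ^ 2 * p.2))
    (f g : ℂ × ℂ → ℂ) (hf : ∀ p : ℂ × ℂ, f p = p.1 ^ 3 * p.2 ^ 3)
    (hg : ∀ p : ℂ × ℂ, g p = p.1 ^ 2 * p.2) :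
    (F '' Set.univ ∩
        ({q : ℂ × ℂ | q.1 ≠ 0 ∧ q.2 = 0} ∪ {q : ℂ × ℂ | q.1 = 0 ∧ q.2 ≠ 0}) = ∅) ∧
    (∀ U : Set (ℂ × ℂ), F '' U ∉ nhds ((0, 0) : ℂ × ℂ)) ∧
    (∀ p : ℂ × ℂ,
      fderiv ℂ f p (1, 0) * fderiv ℂ g p (0, 1) -
        fderiv ℂ f p (0, 1) * fderiv ℂ g p (1, 0) = -3 * p.1 ^ 4 * p.2 ^ 3) ∧
    ¬ (∀ p : ℂ × ℂ,
      fderiv ℂ f p (1, 0) * fderiv ℂ g p (0, 1) -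
        fderiv ℂ f p (0, 1) * fderiv ℂ g p (1, 0) = 0) := by
  have hfe : f = fun p : ℂ × ℂ => p.1 ^ 3 * p.2 ^ 3 := funext hf
  have hge : g = fun p : ℂ × ℂ => p.1 ^ 2 * p.2 := funext hg
  -- key fact: image misses punctured axes
  have key : ∀ p : ℂ × ℂ, F p ∉
      ({q : ℂ × ℂ | q.1 ≠ 0 ∧ q.2 = 0} ∪ {q : ℂ × ℂ | q.1 = 0 ∧ q.2 ≠ 0}) := by
    intro p hp
    rw [hF p] at hp
    rcases hp with ⟨h1, h2⟩ | ⟨h1, h2⟩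
    · simp only at h1 h2
      rcases mul_eq_zero.1 h2 with h | h
      · exact h1 (by rw [pow_eq_zero_iff (by norm_num) |>.1 h]; ring)
      · exact h1 (by rw [h]; ring)
    · simp only at h1 h2
      rcases mul_eq_zero.1 h1 with h | h
      · exact h2 (by rw [pow_eq_zero_iff (by norm_num) |>.1 h]; ring)
      · exact h2 (by rw [pow_eq_zero_iff (by norm_num) |>.1 h]; ring)
  have part1 : F '' Set.univ ∩
      ({q : ℂ × ℂ | q.1 ≠ 0 ∧ q.2 = 0} ∪ {q : ℂ × ℂ | q.1 = 0 ∧ q.2 ≠ 0}) = ∅ := by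
    ext q
    simp only [Set.mem_inter_iff, Set.mem_image, Set.mem_univ, true_and,
      Set.mem_empty_iff_false, iff_false]
    rintro ⟨⟨p, rfl⟩, hq⟩
    exact key p hq
  have part3 : ∀ p : ℂ × ℂ,
      fderiv ℂ f p (1, 0) * fderiv ℂ g p (0, 1) -
        fderiv ℂ f p (0, 1) * fderiv ℂ g p (1, 0) = -3 * p.1 ^ 4 * p.2 ^ 3 := by
    intro p
    have hx : HasFDerivAt (fun q : ℂ × ℂ => q.1) (ContinuousLinearMap.fst ℂ ℂ ℂ) p :=
      hasFDerivAt_fst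
    have hy : HasFDerivAt (fun q : ℂ × ℂ => q.2) (ContinuousLinearMap.snd ℂ ℂ ℂ) p :=
      hasFDerivAt_snd
    have hdf := ((hx.mul hx).mul hx).mul ((hy.mul hy).mul hy)
    have hdg := (hx.mul hx).mul hy
    have ef : f = fun q : ℂ × ℂ => q.1 * q.1 * q.1 * (q.2 * q.2 * q.2) := by
      funext q; rw [hf]; ring
    have eg : g = fun q : ℂ × ℂ => q.1 * q.1 * q.2 := by
      funext q; rw [hg]; ring
    rw [ef, eg, show fderiv ℂ (fun q : ℂ × ℂ => q.1 * q.1 * q.1 * (q.2 * q.2 * q.2)) p = _ from hdf.fderiv,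
      show fderiv ℂ (fun q : ℂ × ℂ => q.1 * q.1 * q.2) p = _ from hdg.fderiv]
    simp only [ContinuousLinearMap.add_apply, ContinuousLinearMap.smul_apply,
      ContinuousLinearMap.coe_fst', ContinuousLinearMap.coe_snd', smul_eq_mul, Pi.mul_apply]
    ring
  refine ⟨part1, ?_, part3, ?_⟩
  · intro U hU
    rcases Metric.mem_nhds_iff.1 hU with ⟨ε, hε, hball⟩
    have hq : ((0 : ℂ), ((ε / 2 : ℝ) : ℂ)) ∈ Metric.ball ((0, 0) : ℂ × ℂ) ε := by
      simp only [Metric.mem_ball, Prod.dist_eq, dist_self, Complex.dist_eq, sub_zero]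
      rw [max_lt_iff]
      refine ⟨hε, ?_⟩
      rw [Complex.norm_real, Real.norm_eq_abs, abs_of_pos (by positivity)]
      linarith
    rcases hball hq with ⟨p, _, hp⟩
    apply key p
    rw [hp]
    right
    constructor
    · rfl
    · simp only [ne_eq, Complex.ofReal_eq_zero]
      positivity
  · intro h
    have h1 := part3 (1, 1)
    rw [h (1, 1)] at h1
    norm_num at h1
end
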